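/- arXiv:1102.5424 — 2 statements merged into one kernel-verified Lean document; each statement's English description precedes it below -/
import Mathlib

section
/- If M is a pseudo hoop with prelinearity, then for all x, y ∈ M the join x ∨ y exists and ((x ⇝ y) → y) ∧ ((y ⇝ x) → x) = x ∨ y = ((x → y) ⇝ y) ∧ ((y → x) ⇝ x); in particular M is a lattice. -/
universe u

structure PseudoHoop (M : Type u) where
  mul : M → M → M
  one : M
  imp : M → M → M
  rimp : M → M → M
  mul_one : ∀ x, mul x one = x
  one_mul : ∀ x, mul one x = x
  imp_self : ∀ x, imp x x = one
  rimp_self : ∀ x, rimp x x = one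
  mul_imp : ∀ x y z, imp (mul x y) z = imp x (imp y z)
  mul_rimp : ∀ x y z, rimp (mul x y) z = rimp y (rimp x z)
  div1 : ∀ x y, mul (imp x y) x = mul (imp y x) y
  div2 : ∀ x y, mul (imp x y) x = mul x (rimp x y)
  div3 : ∀ x y, mul x (rimp x y) = mul y (rimp y x)

namespace PseudoHoop

variable {M : Type u} (H : PseudoHoop M)

/-- The induced order: x ≤ y iff x → y = 1. -/
def le (x y : M) : Prop := H.imp x y = H.one

/-- The derived meet: x ∧ y = (x → y) ⊙ x. -/
def meet (x y : M) : M := H.mul (H.imp x y) x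

/-- Powers: a^0 = 1, a^(n+1) = a^n ⊙ a. -/
def pow (a : M) : ℕ → M
  | 0 => H.one
  | n + 1 => H.mul (pow a n) a

/-- j is the least upper bound of x and y. -/
def IsJoin (x y j : M) : Prop :=
  H.le x j ∧ H.le y j ∧ ∀ c, H.le x c → H.le y c → H.le j c

/-- Prelinearity: (x→y) ∨ (y→x) and (x⇝y) ∨ (y⇝x) exist and equal 1. -/
def Prelinear : Prop :=
  ∀ x y, H.IsJoin (H.imp x y) (H.imp y x) H.one ∧ H.IsJoin (H.rimp x y) (H.rimp y x) H.one

/-- Basic pseudo hoop. -/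
def Basic : Prop :=
  (∀ x y z, H.le (H.imp (H.imp x y) z) (H.imp (H.imp (H.imp y x) z) z)) ∧
  (∀ x y z, H.le (H.rimp (H.rimp x y) z) (H.rimp (H.rimp (H.rimp y x) z) z))

/-- Filters: contain 1, closed under ⊙ and upward closed. -/
def IsFilter (F : Set M) : Prop :=
  H.one ∈ F ∧ (∀ x ∈ F, ∀ y ∈ F, H.mul x y ∈ F) ∧ (∀ x ∈ F, ∀ y, H.le x y → y ∈ F)

/-- Filter generated by a set. -/
def filterGen (S : Set M) : Set M := ⋂₀ {F | H.IsFilter F ∧ S ⊆ F}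

/-- Prime filter. -/
def IsPrime (F : Set M) : Prop :=
  H.IsFilter F ∧
    ∀ F₁ F₂, H.IsFilter F₁ → H.IsFilter F₂ → F₁ ∩ F₂ ⊆ F → F₁ ⊆ F ∨ F₂ ⊆ F

/-- V is a value of g: a filter maximal with respect to not containing g. -/
def IsValueOf (V : Set M) (g : M) : Prop :=
  H.IsFilter V ∧ g ∉ V ∧ ∀ W, H.IsFilter W → V ⊆ W → g ∉ W → W = V

/-- V is a value of M: a value of some g ≠ 1. -/
def IsValue (V : Set M) : Prop := ∃ g, g ≠ H.one ∧ H.IsValueOf V g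

end PseudoHoop

namespace PseudoHoop

variable {M : Type u} (H : PseudoHoop M)

lemma le_of_rle {x y : M} (h : H.rimp x y = H.one) : H.le x y := by
  have hx : x = H.mul (H.imp x y) x := by rw [H.div2, h, H.mul_one]
  show H.imp x y = H.one
  calc H.imp x y = H.imp (H.mul (H.imp x y) x) y := by rw [← hx]
    _ = H.imp (H.imp x y) (H.imp x y) := H.mul_imp _ _ _
    _ = H.one := H.imp_self _

lemma rle_of_le {x y : M} (h : H.le x y) : H.rimp x y = H.one := by
  have h' : H.imp x y = H.one := h
  have hx : x = H.mul x (H.rimp x y) := by rw [← H.div2, h', H.one_mul]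
  calc H.rimp x y = H.rimp (H.mul x (H.rimp x y)) y := by rw [← hx]
    _ = H.rimp (H.rimp x y) (H.rimp x y) := H.mul_rimp _ _ _
    _ = H.one := H.rimp_self _

lemma le_antisymm {x y : M} (h1 : H.le x y) (h2 : H.le y x) : x = y := by
  have h1' : H.imp x y = H.one := h1
  have h2' : H.imp y x = H.one := h2
  calc x = H.mul H.one x := (H.one_mul x).symm
    _ = H.mul (H.imp x y) x := by rw [h1']
    _ = H.mul (H.imp y x) y := H.div1 x y
    _ = H.mul H.one y := by rw [h2']
    _ = y := H.one_mul y

lemma one_imp_imp (y z : M) : H.imp H.one (H.imp y z) = H.imp y z := by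
  rw [← H.mul_imp, H.one_mul]

lemma imp_val_imp_one (y z : M) : H.imp (H.imp y z) H.one = H.one := by
  set a := H.imp y z with ha
  have h1 : H.mul (H.imp a H.one) a = a := by
    rw [H.div1, ha, H.one_imp_imp, H.mul_one]
  have h2 : H.imp (H.mul (H.imp a H.one) a) H.one = H.one := by
    rw [H.mul_imp, H.imp_self]
  rw [h1] at h2
  exact h2

lemma one_imp (x : M) : H.imp H.one x = x := by
  have hxt : H.imp x (H.imp H.one x) = H.one := by
    rw [← H.mul_imp, H.mul_one, H.imp_self]
  have ht : H.mul (H.imp x H.one) x = H.imp H.one x := by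
    rw [H.div1, H.mul_one]
  have htx : H.imp (H.imp H.one x) x = H.one := by
    rw [← ht, H.mul_imp, H.imp_self]
    exact H.imp_val_imp_one x H.one
  exact H.le_antisymm htx hxt

lemma imp_one (x : M) : H.imp x H.one = H.one := by
  have h1 : H.mul (H.imp x H.one) x = x := by
    rw [H.div1, H.one_imp, H.mul_one]
  have h2 : H.imp (H.mul (H.imp x H.one) x) H.one = H.one := by
    rw [H.mul_imp, H.imp_self]
  rw [h1] at h2
  exact h2

lemma le_one (x : M) : H.le x H.one := H.imp_one x

lemma rimp_one (x : M) : H.rimp x H.one = H.one := by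
  have h1 : H.mul x (H.rimp x H.one) = x := by
    rw [← H.div2, H.imp_one, H.one_mul]
  have h2 : H.rimp (H.mul x (H.rimp x H.one)) H.one = H.one := by
    rw [H.mul_rimp, H.rimp_self]
  rw [h1] at h2
  exact h2

lemma le_trans {x y z : M} (h1 : H.le x y) (h2 : H.le y z) : H.le x z := by
  have h1' : H.imp x y = H.one := h1
  have h2' : H.imp y z = H.one := h2
  have hx : x = H.mul (H.imp y x) y := by
    calc x = H.mul H.one x := (H.one_mul x).symm
      _ = H.mul (H.imp x y) x := by rw [h1']
      _ = H.mul (H.imp y x) y := H.div1 x y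
  show H.imp x z = H.one
  calc H.imp x z = H.imp (H.mul (H.imp y x) y) z := by rw [← hx]
    _ = H.imp (H.imp y x) (H.imp y z) := H.mul_imp _ _ _
    _ = H.imp (H.imp y x) H.one := by rw [h2']
    _ = H.one := H.imp_one _

lemma mul_le_iff_imp {a b c : M} : H.le (H.mul a b) c ↔ H.le a (H.imp b c) := by
  unfold PseudoHoop.le
  rw [H.mul_imp]

lemma mul_le_iff_rimp {a b c : M} : H.le (H.mul a b) c ↔ H.le b (H.rimp a c) := by
  constructor
  · intro h
    have h' := H.rle_of_le h
    rw [H.mul_rimp] at h'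
    exact H.le_of_rle h'
  · intro h
    have h' := H.rle_of_le h
    apply H.le_of_rle
    rw [H.mul_rimp]
    exact h'

lemma mul_le_mul_left {a b : M} (h : H.le a b) (w : M) :
    H.le (H.mul a w) (H.mul b w) := by
  have hb : H.le b (H.imp w (H.mul b w)) := by
    show H.imp b (H.imp w (H.mul b w)) = H.one
    rw [← H.mul_imp, H.imp_self]
  exact H.mul_le_iff_imp.mpr (H.le_trans h hb)

lemma mul_le_mul_right {a b : M} (h : H.le a b) (w : M) :
    H.le (H.mul w a) (H.mul w b) := by
  have hb : H.le b (H.rimp w (H.mul w b)) := by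
    apply H.le_of_rle
    rw [← H.mul_rimp, H.rimp_self]
  exact H.mul_le_iff_rimp.mpr (H.le_trans h hb)

lemma mul_le_self (x z : M) : H.le (H.mul x z) x := by
  have := H.mul_le_mul_right (H.le_one z) x
  rwa [H.mul_one] at this

lemma mul_le_self' (x z : M) : H.le (H.mul z x) x := by
  have := H.mul_le_mul_left (H.le_one z) x
  rwa [H.one_mul] at this

lemma meet_le_left (x y : M) : H.le (H.meet x y) x := by
  show H.imp (H.mul (H.imp x y) x) x = H.one
  rw [H.mul_imp, H.imp_self]
  exact H.imp_one _

lemma meet_le_right (x y : M) : H.le (H.meet x y) y := by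
  apply H.le_of_rle
  show H.rimp (H.mul (H.imp x y) x) y = H.one
  rw [H.div2, H.mul_rimp, H.rimp_self]

lemma le_meet {c x y : M} (h1 : H.le c x) (h2 : H.le c y) : H.le c (H.meet x y) := by
  have h1' : H.imp c x = H.one := h1
  have hc : c = H.mul x (H.rimp x c) := by
    calc c = H.mul H.one c := (H.one_mul c).symm
      _ = H.mul (H.imp c x) c := by rw [h1']
      _ = H.mul (H.imp x c) x := H.div1 c x
      _ = H.mul x (H.rimp x c) := H.div2 x c
  have hmono : H.le (H.rimp x c) (H.rimp x y) := by
    apply H.le_of_rle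
    rw [← H.mul_rimp, ← hc]
    exact H.rle_of_le h2
  have hfin := H.mul_le_mul_right hmono x
  rw [← hc] at hfin
  show H.le c (H.mul (H.imp x y) x)
  rw [H.div2]
  exact hfin

lemma meet_rimp_le (a b : M) : H.le (H.mul a (H.rimp a b)) b := by
  rw [← H.div2]
  exact H.meet_le_right a b

end PseudoHoop

theorem pseudoHoop_prelinear_join_exists {M : Type u} (H : PseudoHoop M)
    (hpre : H.Prelinear) :
    ∀ x y : M,
      H.IsJoin x y (H.meet (H.imp (H.rimp x y) y) (H.imp (H.rimp y x) x)) ∧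
      H.meet (H.imp (H.rimp x y) y) (H.imp (H.rimp y x) x) =
        H.meet (H.rimp (H.imp x y) y) (H.rimp (H.imp y x) x) := by
  intro x y
  -- notation
  have J1 : H.IsJoin x y (H.meet (H.imp (H.rimp x y) y) (H.imp (H.rimp y x) x)) := by
    have hxA : H.le x (H.imp (H.rimp x y) y) :=
      H.mul_le_iff_imp.mp (H.meet_rimp_le x y)
    have hxB : H.le x (H.imp (H.rimp y x) x) :=
      H.mul_le_iff_imp.mp (H.mul_le_self x (H.rimp y x))
    have hyA : H.le y (H.imp (H.rimp x y) y) :=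
      H.mul_le_iff_imp.mp (H.mul_le_self y (H.rimp x y))
    have hyB : H.le y (H.imp (H.rimp y x) x) :=
      H.mul_le_iff_imp.mp (H.meet_rimp_le y x)
    refine ⟨H.le_meet hxA hxB, H.le_meet hyA hyB, ?_⟩
    intro c hxc hyc
    set u := H.meet (H.imp (H.rimp x y) y) (H.imp (H.rimp y x) x) with hu
    have h1 : H.le (H.rimp x y) (H.rimp u c) := by
      apply H.mul_le_iff_rimp.mp
      have ha : H.le (H.mul u (H.rimp x y))
          (H.mul (H.imp (H.rimp x y) y) (H.rimp x y)) :=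
        H.mul_le_mul_left (H.meet_le_left _ _) _
      have hb : H.le (H.mul (H.imp (H.rimp x y) y) (H.rimp x y)) y :=
        H.meet_le_right (H.rimp x y) y
      exact H.le_trans ha (H.le_trans hb hyc)
    have h2 : H.le (H.rimp y x) (H.rimp u c) := by
      apply H.mul_le_iff_rimp.mp
      have ha : H.le (H.mul u (H.rimp y x))
          (H.mul (H.imp (H.rimp y x) x) (H.rimp y x)) :=
        H.mul_le_mul_left (H.meet_le_right _ _) _
      have hb : H.le (H.mul (H.imp (H.rimp y x) x) (H.rimp y x)) x :=
        H.meet_le_right (H.rimp y x) x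
      exact H.le_trans ha (H.le_trans hb hxc)
    have htop : H.imp H.one (H.rimp u c) = H.one := ((hpre x y).2).2.2 _ h1 h2
    rw [H.one_imp] at htop
    exact H.le_of_rle htop
  have J2 : H.IsJoin x y (H.meet (H.rimp (H.imp x y) y) (H.rimp (H.imp y x) x)) := by
    have hxA : H.le x (H.rimp (H.imp x y) y) :=
      H.mul_le_iff_rimp.mp (H.meet_le_right x y)
    have hxB : H.le x (H.rimp (H.imp y x) x) :=
      H.mul_le_iff_rimp.mp (H.mul_le_self' x (H.imp y x))
    have hyA : H.le y (H.rimp (H.imp x y) y) :=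
      H.mul_le_iff_rimp.mp (H.mul_le_self' y (H.imp x y))
    have hyB : H.le y (H.rimp (H.imp y x) x) :=
      H.mul_le_iff_rimp.mp (H.meet_le_right y x)
    refine ⟨H.le_meet hxA hxB, H.le_meet hyA hyB, ?_⟩
    intro c hxc hyc
    set u := H.meet (H.rimp (H.imp x y) y) (H.rimp (H.imp y x) x) with hu
    have h1 : H.le (H.imp x y) (H.imp u c) := by
      apply H.mul_le_iff_imp.mp
      have ha : H.le (H.mul (H.imp x y) u)
          (H.mul (H.imp x y) (H.rimp (H.imp x y) y)) :=
        H.mul_le_mul_right (H.meet_le_left _ _) _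
      have hb : H.le (H.mul (H.imp x y) (H.rimp (H.imp x y) y)) y :=
        H.meet_rimp_le (H.imp x y) y
      exact H.le_trans ha (H.le_trans hb hyc)
    have h2 : H.le (H.imp y x) (H.imp u c) := by
      apply H.mul_le_iff_imp.mp
      have ha : H.le (H.mul (H.imp y x) u)
          (H.mul (H.imp y x) (H.rimp (H.imp y x) x)) :=
        H.mul_le_mul_right (H.meet_le_right _ _) _
      have hb : H.le (H.mul (H.imp y x) (H.rimp (H.imp y x) x)) x :=
        H.meet_rimp_le (H.imp y x) x
      exact H.le_trans ha (H.le_trans hb hxc)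
    have htop : H.imp H.one (H.imp u c) = H.one := ((hpre x y).1).2.2 _ h1 h2
    rw [H.one_imp] at htop
    exact htop
  exact ⟨J1, H.le_antisymm (J1.2.2 _ J2.1 J2.2.1) (J2.2.2 _ J1.1 J1.2.1)⟩
end

section
/- Let F be a filter of a basic pseudo hoop M. Then F is prime if and only if for all f, g ∈ M with f ∨ g = 1, either f ∈ F or g ∈ F; and this holds if and only if f ∨ g ∈ F implies f ∈ F or g ∈ F. -/
universe u

section Aux

variable {M : Type u} (H : PseudoHoop M)

theorem ph_le_refl (x : M) : H.le x x := H.imp_self x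

theorem ph_imp_one_mul (x : M) : H.mul (H.imp x H.one) x = H.imp H.one x := by
  have h := H.div1 x H.one
  rwa [H.mul_one] at h

theorem ph_le_one_imp (x : M) : H.imp x (H.imp H.one x) = H.one := by
  have h := H.mul_imp x H.one x
  rw [H.mul_one] at h
  rw [← h, H.imp_self]

theorem ph_imp_one_imp_one (x : M) : H.imp (H.imp x H.one) H.one = H.one := by
  have h := H.mul_imp (H.imp x H.one) x (H.imp H.one x)
  rw [ph_imp_one_mul H, H.imp_self, ph_le_one_imp H] at h
  exact h.symm

theorem ph_one_imp_imp_self (x : M) : H.imp (H.imp H.one x) x = H.one := by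
  have h := H.mul_imp (H.imp x H.one) x x
  rw [ph_imp_one_mul H, H.imp_self, ph_imp_one_imp_one H] at h
  exact h

theorem ph_antisymm {a b : M} (h1 : H.imp a b = H.one) (h2 : H.imp b a = H.one) : a = b := by
  have h := H.div1 a b
  rw [h1, h2, H.one_mul, H.one_mul] at h
  exact h

theorem ph_one_imp (x : M) : H.imp H.one x = x :=
  ph_antisymm H (ph_one_imp_imp_self H x) (ph_le_one_imp H x)

theorem ph_imp_one (x : M) : H.imp x H.one = H.one := by
  have hx : H.mul (H.imp x H.one) x = x := by rw [ph_imp_one_mul H, ph_one_imp H]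
  have h := H.mul_imp (H.imp x H.one) x H.one
  rw [hx, H.imp_self] at h
  exact h

theorem ph_rimp_one_mul (x : M) : H.mul x (H.rimp x H.one) = H.rimp H.one x := by
  have h := H.div3 x H.one
  rwa [H.one_mul] at h

theorem ph_le_one_rimp (x : M) : H.rimp x (H.rimp H.one x) = H.one := by
  have h := H.mul_rimp H.one x x
  rw [H.one_mul] at h
  rw [← h, H.rimp_self]

theorem ph_rimp_one_rimp_one (x : M) : H.rimp (H.rimp x H.one) H.one = H.one := by
  have h := H.mul_rimp x (H.rimp x H.one) (H.rimp H.one x)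
  rw [ph_rimp_one_mul H, H.rimp_self, ph_le_one_rimp H] at h
  exact h.symm

theorem ph_one_rimp_rimp_self (x : M) : H.rimp (H.rimp H.one x) x = H.one := by
  have h := H.mul_rimp x (H.rimp x H.one) x
  rw [ph_rimp_one_mul H, H.rimp_self, ph_rimp_one_rimp_one H] at h
  exact h

theorem ph_antisymm' {a b : M} (h1 : H.rimp a b = H.one) (h2 : H.rimp b a = H.one) : a = b := by
  have h := H.div3 a b
  rw [h1, h2, H.mul_one, H.mul_one] at h
  exact h

theorem ph_one_rimp (x : M) : H.rimp H.one x = x :=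
  ph_antisymm' H (ph_one_rimp_rimp_self H x) (ph_le_one_rimp H x)

theorem ph_rimp_one (x : M) : H.rimp x H.one = H.one := by
  have hx : H.mul x (H.rimp x H.one) = x := by rw [ph_rimp_one_mul H, ph_one_rimp H]
  have h := H.mul_rimp x (H.rimp x H.one) H.one
  rw [hx, H.rimp_self] at h
  exact h

theorem ph_rimp_eq_one_of_imp {x y : M} (h : H.imp x y = H.one) : H.rimp x y = H.one := by
  have h2 := H.div2 x y
  rw [h, H.one_mul] at h2
  have h3 := h2.trans (H.div3 x y)
  have h4 := H.mul_rimp y (H.rimp y x) y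
  rw [← h3, H.rimp_self, ph_rimp_one H] at h4
  exact h4

theorem ph_imp_eq_one_of_rimp {x y : M} (h : H.rimp x y = H.one) : H.imp x y = H.one := by
  have h2 := H.div2 x y
  rw [h, H.mul_one] at h2
  have h3 := h2.symm.trans (H.div1 x y)
  have h4 := H.mul_imp (H.imp y x) y y
  rw [← h3, H.imp_self, ph_imp_one H] at h4
  exact h4

theorem ph_le_trans {a b c : M} (h1 : H.le a b) (h2 : H.le b c) : H.le a c := by
  have h1' : H.imp a b = H.one := h1
  have h2' : H.imp b c = H.one := h2
  have hd := H.div1 a b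
  rw [h1', H.one_mul] at hd
  show H.imp a c = H.one
  rw [hd, H.mul_imp, h2', ph_imp_one H]

theorem ph_le_mul_iff_imp (x y z : M) : H.le (H.mul x y) z ↔ H.le x (H.imp y z) := by
  show H.imp (H.mul x y) z = H.one ↔ H.imp x (H.imp y z) = H.one
  rw [H.mul_imp]

theorem ph_le_mul_iff_rimp (x y z : M) : H.le (H.mul x y) z ↔ H.le y (H.rimp x z) := by
  constructor
  · intro h
    have h1 : H.rimp (H.mul x y) z = H.one := ph_rimp_eq_one_of_imp H h
    rw [H.mul_rimp] at h1
    exact ph_imp_eq_one_of_rimp H h1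
  · intro h
    have h1 : H.rimp y (H.rimp x z) = H.one := ph_rimp_eq_one_of_imp H h
    have h2 : H.rimp (H.mul x y) z = H.one := by rw [H.mul_rimp]; exact h1
    exact ph_imp_eq_one_of_rimp H h2

theorem ph_le_one (x : M) : H.le x H.one := ph_imp_one H x

theorem ph_eq_one_of_one_le {x : M} (h : H.le H.one x) : x = H.one := by
  have h' : H.imp H.one x = H.one := h
  rw [ph_one_imp H] at h'
  exact h'

theorem ph_mul_le_mul_right {a b : M} (h : H.le a b) (c : M) :
    H.le (H.mul a c) (H.mul b c) := by
  rw [ph_le_mul_iff_imp H]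
  have hb : H.le b (H.imp c (H.mul b c)) := (ph_le_mul_iff_imp H b c _).mp (ph_le_refl H _)
  exact ph_le_trans H h hb

theorem ph_mul_le_mul_left {a b : M} (h : H.le a b) (c : M) :
    H.le (H.mul c a) (H.mul c b) := by
  rw [ph_le_mul_iff_rimp H]
  have hb : H.le b (H.rimp c (H.mul c b)) := (ph_le_mul_iff_rimp H c b _).mp (ph_le_refl H _)
  exact ph_le_trans H h hb

theorem ph_mul_le_left (a b : M) : H.le (H.mul a b) b := by
  have h := ph_mul_le_mul_right H (ph_le_one H a) b
  rwa [H.one_mul] at h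

theorem ph_mul_le_right (a b : M) : H.le (H.mul a b) a := by
  have h := ph_mul_le_mul_left H (ph_le_one H b) a
  rwa [H.mul_one] at h

theorem ph_mul_assoc (x y z : M) : H.mul (H.mul x y) z = H.mul x (H.mul y z) := by
  have k : ∀ w, H.imp (H.mul (H.mul x y) z) w = H.imp (H.mul x (H.mul y z)) w := by
    intro w
    simp only [H.mul_imp]
  apply ph_antisymm H
  · have h := k (H.mul x (H.mul y z))
    rw [H.imp_self] at h
    exact h
  · have h := (k (H.mul (H.mul x y) z)).symm
    rw [H.imp_self] at h
    exact h

theorem ph_pow_zero (a : M) : H.pow a 0 = H.one := rfl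

theorem ph_pow_succ (a : M) (n : ℕ) : H.pow a (n + 1) = H.mul (H.pow a n) a := rfl

theorem ph_pow_one (a : M) : H.pow a 1 = a := by
  rw [ph_pow_succ H, ph_pow_zero H, H.one_mul]

theorem ph_pow_add (a : M) (n m : ℕ) :
    H.pow a (n + m) = H.mul (H.pow a n) (H.pow a m) := by
  induction m with
  | zero => rw [Nat.add_zero, ph_pow_zero H, H.mul_one]
  | succ m ih =>
    rw [Nat.add_succ, ph_pow_succ H a (n + m), ph_pow_succ H a m, ih, ph_mul_assoc H]

theorem ph_isJoin_symm {a b j : M} (h : H.IsJoin a b j) : H.IsJoin b a j :=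
  ⟨h.2.1, h.1, fun c hb ha => h.2.2 c ha hb⟩

theorem ph_mul_isJoin {a b j : M} (c : M) (h : H.IsJoin a b j) :
    H.IsJoin (H.mul c a) (H.mul c b) (H.mul c j) := by
  refine ⟨ph_mul_le_mul_left H h.1 c, ph_mul_le_mul_left H h.2.1 c, ?_⟩
  intro d h1 h2
  rw [ph_le_mul_iff_rimp H] at h1 h2 ⊢
  exact h.2.2 _ h1 h2

theorem ph_pow_isJoin_one {a b : M} (h : H.IsJoin a b H.one) :
    ∀ n, H.IsJoin (H.pow a n) b H.one := by
  intro n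
  induction n with
  | zero =>
    rw [ph_pow_zero H]
    exact ⟨ph_le_refl H _, ph_le_one H b, fun c h1 _ => h1⟩
  | succ n ih =>
    refine ⟨ph_le_one H _, ph_le_one H b, ?_⟩
    intro c h1 h2
    rw [ph_pow_succ H] at h1
    have hd := ph_mul_isJoin H (H.pow a n) h
    rw [H.mul_one] at hd
    have hab : H.le (H.pow a n) c :=
      hd.2.2 c h1 (ph_le_trans H (ph_mul_le_left H _ _) h2)
    exact ih.2.2 c hab h2

theorem ph_pow_pow_isJoin_one {a b : M} (h : H.IsJoin a b H.one) (n m : ℕ) :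
    H.IsJoin (H.pow a n) (H.pow b m) H.one := by
  have h1 := ph_pow_isJoin_one H h n
  have h2 := ph_pow_isJoin_one H (ph_isJoin_symm H h1) m
  exact ph_isJoin_symm H h2

theorem ph_filterGen_isFilter (S : Set M) : H.IsFilter (H.filterGen S) := by
  refine ⟨?_, ?_, ?_⟩
  · intro t ht
    exact ht.1.1
  · intro x hx y hy t ht
    exact ht.1.2.1 x (hx t ht) y (hy t ht)
  · intro x hx y hxy t ht
    exact ht.1.2.2 x (hx t ht) y hxy

theorem ph_subset_filterGen (S : Set M) : S ⊆ H.filterGen S := by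
  intro x hx t ht
  exact ht.2 hx

theorem ph_filterGen_subset {S W : Set M} (hW : H.IsFilter W) (hSW : S ⊆ W) :
    H.filterGen S ⊆ W := by
  intro x hx
  exact hx W ⟨hW, hSW⟩

theorem ph_mem_powFilter_of_filterGen {a x : M} (hx : x ∈ H.filterGen {a}) :
    ∃ n, H.le (H.pow a n) x := by
  have hP : H.IsFilter {y | ∃ n, H.le (H.pow a n) y} := by
    refine ⟨⟨0, by rw [ph_pow_zero H]; exact ph_le_refl H _⟩, ?_, ?_⟩
    · rintro u ⟨n, hn⟩ v ⟨m, hm⟩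
      refine ⟨n + m, ?_⟩
      rw [ph_pow_add H]
      exact ph_le_trans H (ph_mul_le_mul_right H hn _) (ph_mul_le_mul_left H hm _)
    · rintro u ⟨n, hn⟩ v huv
      exact ⟨n, ph_le_trans H hn huv⟩
  have haP : ({a} : Set M) ⊆ {y | ∃ n, H.le (H.pow a n) y} := by
    intro z hz
    rw [Set.mem_singleton_iff] at hz
    subst hz
    exact ⟨1, by rw [ph_pow_one H]; exact ph_le_refl H _⟩
  exact ph_filterGen_subset H hP haP hx

theorem ph_prelin (hB : H.Basic) (x y : M) :
    H.IsJoin (H.imp x y) (H.imp y x) H.one := by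
  refine ⟨ph_le_one H _, ph_le_one H _, ?_⟩
  intro c h1 h2
  have hb := hB.1 x y c
  have h1' : H.imp (H.imp x y) c = H.one := h1
  have h2' : H.imp (H.imp y x) c = H.one := h2
  rw [h1', h2', ph_one_imp H] at hb
  exact hb

theorem ph_mp_le (x y : M) : H.le (H.mul (H.imp x y) x) y := by
  show H.imp (H.mul (H.imp x y) x) y = H.one
  rw [H.mul_imp, H.imp_self]

theorem ph_mp_rimp_le (x y : M) : H.le (H.mul x (H.rimp x y)) y := by
  show H.imp (H.mul x (H.rimp x y)) y = H.one
  exact ph_imp_eq_one_of_rimp H (by rw [H.mul_rimp, H.rimp_self])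

theorem ph_le_ub_left (a b : M) : H.le a (H.rimp (H.imp a b) b) :=
  (ph_le_mul_iff_rimp H _ _ _).mp (ph_mp_le H a b)

theorem ph_le_ub_right (a b : M) : H.le b (H.rimp (H.imp a b) b) :=
  (ph_le_mul_iff_rimp H _ _ _).mp (ph_mul_le_left H _ _)

end Aux

theorem basicPseudoHoop_prime_iff_join {M : Type u} (H : PseudoHoop M)
    (hB : H.Basic) (F : Set M) (hF : H.IsFilter F) :
    ((∀ F₁ F₂ : Set M, H.IsFilter F₁ → H.IsFilter F₂ → F₁ ∩ F₂ ⊆ F → F₁ ⊆ F ∨ F₂ ⊆ F) ↔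
      (∀ f g : M, H.IsJoin f g H.one → f ∈ F ∨ g ∈ F)) ∧
    ((∀ f g : M, H.IsJoin f g H.one → f ∈ F ∨ g ∈ F) ↔
      (∀ f g j : M, H.IsJoin f g j → j ∈ F → f ∈ F ∨ g ∈ F)) := by
  have prelin := ph_prelin H hB
  constructor
  · constructor
    · intro hPrime f g hfg
      have hfil1 := ph_filterGen_isFilter H {f}
      have hfil2 := ph_filterGen_isFilter H {g}
      have hsub : H.filterGen {f} ∩ H.filterGen {g} ⊆ F := by
        rintro x ⟨hx1, hx2⟩
        obtain ⟨n, hn⟩ := ph_mem_powFilter_of_filterGen H hx1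
        obtain ⟨m, hm⟩ := ph_mem_powFilter_of_filterGen H hx2
        have hj := ph_pow_pow_isJoin_one H hfg n m
        have h1 : H.le H.one x := hj.2.2 x hn hm
        rw [ph_eq_one_of_one_le H h1]
        exact hF.1
      rcases hPrime _ _ hfil1 hfil2 hsub with h | h
      · exact Or.inl (h (ph_subset_filterGen H {f} (Set.mem_singleton f)))
      · exact Or.inr (h (ph_subset_filterGen H {g} (Set.mem_singleton g)))
    · intro hP1 F₁ F₂ h1 h2 hsub
      by_contra hc
      push_neg at hc
      obtain ⟨hn1, hn2⟩ := hc
      obtain ⟨a, haF₁, haF⟩ := Set.not_subset.mp hn1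
      obtain ⟨b, hbF₂, hbF⟩ := Set.not_subset.mp hn2
      have hu : H.rimp (H.imp a b) b ∈ F :=
        hsub ⟨h1.2.2 a haF₁ _ (ph_le_ub_left H a b), h2.2.2 b hbF₂ _ (ph_le_ub_right H a b)⟩
      have hv : H.rimp (H.imp b a) a ∈ F :=
        hsub ⟨h1.2.2 a haF₁ _ (ph_le_ub_right H b a), h2.2.2 b hbF₂ _ (ph_le_ub_left H b a)⟩
      rcases hP1 _ _ (prelin a b) with h | h
      · have hm : H.mul (H.imp a b) (H.rimp (H.imp a b) b) ∈ F := hF.2.1 _ h _ hu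
        exact hbF (hF.2.2 _ hm b (ph_mp_rimp_le H _ b))
      · have hm : H.mul (H.imp b a) (H.rimp (H.imp b a) a) ∈ F := hF.2.1 _ h _ hv
        exact haF (hF.2.2 _ hm a (ph_mp_rimp_le H _ a))
  · constructor
    · intro hP1 f g j hj hjF
      rcases hP1 _ _ (prelin f g) with h | h
      · have hjub : H.le j (H.rimp (H.imp f g) g) :=
          hj.2.2 _ (ph_le_ub_left H f g) (ph_le_ub_right H f g)
        have himp : H.le (H.imp f g) (H.imp j g) := by
          rw [← ph_le_mul_iff_imp H, ph_le_mul_iff_rimp H]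
          exact hjub
        have hjg : H.imp j g ∈ F := hF.2.2 _ h _ himp
        have hm : H.mul (H.imp j g) j ∈ F := hF.2.1 _ hjg _ hjF
        exact Or.inr (hF.2.2 _ hm g (ph_mp_le H j g))
      · have hjub : H.le j (H.rimp (H.imp g f) f) :=
          hj.2.2 _ (ph_le_ub_right H g f) (ph_le_ub_left H g f)
        have himp : H.le (H.imp g f) (H.imp j f) := by
          rw [← ph_le_mul_iff_imp H, ph_le_mul_iff_rimp H]
          exact hjub
        have hjf : H.imp j f ∈ F := hF.2.2 _ h _ himp
        have hm : H.mul (H.imp j f) j ∈ F := hF.2.1 _ hjf _ hjF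
        exact Or.inl (hF.2.2 _ hm f (ph_mp_le H j f))
    · intro h2 f g hfg
      exact h2 f g H.one hfg hF.1
end
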